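/- arXiv:2510.25159 — 4 statements merged into one kernel-verified Lean document; each statement's English description precedes it below -/
import Mathlib

section
/- Termination of recursive winding-number evaluation: let γ : [0,1] → ℝ² be C¹ with ‖γ'‖ ≤ B, let p ∈ ℝ², let ε > 0, and let d = dist(p, γ([0,1])). If m is a natural number with 2^m > 2B / max(ε, d), then for every depth-m subinterval [a,b] (of length 2^{-m}), either dist(p, γ(a)) < ε or dist(p, γ(b)) < ε, or p lies outside the ellipse region {x : dist(x,γ(a)) + dist(x,γ(b)) ≤ B(b−a)}. -/
/-! The bounding ellipse of `[a, b]` has major axis `B (b - a) = B / 2 ^ m`, which the choice of `m`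
makes smaller than `max ε d`. If `dist p (γ b) ≥ ε` then, as `γ b` lies on the curve, it is at
distance at least `max ε d` from `p`, so `p` cannot lie in the ellipse. -/

open Set

lemma succ_div_two_pow_mem_Icc {k m : ℕ} (hk : k < 2 ^ m) :
    ((k : ℝ) + 1) / 2 ^ m ∈ Icc (0 : ℝ) 1 := by
  have hk' : (k : ℝ) + 1 ≤ 2 ^ m := by exact_mod_cast hk
  exact ⟨by positivity, (div_le_one (by positivity)).mpr hk'⟩

lemma div_two_pow_lt_half_of_div_lt {B M : ℝ} {m : ℕ} (hM : 0 < M) (hm : 2 * B / M < 2 ^ m) :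
    B / 2 ^ m < M / 2 := by
  rw [div_lt_div_iff₀ (by positivity) two_pos]
  linarith [(div_lt_iff₀ hM).mp hm]

theorem recursion_terminates_general (γ : ℝ → ℝ × ℝ) (B : ℝ)
    (p : ℝ × ℝ) (ε : ℝ) (hε : 0 < ε)
    (d : ℝ) (hd : d = Metric.infDist p (γ '' Set.Icc (0:ℝ) 1))
    (m : ℕ) (hm : 2 * B / max ε d < 2 ^ m)
    (k : ℕ) (hk : k < 2 ^ m)
    (a b : ℝ) (ha : a = (k : ℝ) / 2 ^ m) (hb : b = ((k : ℝ) + 1) / 2 ^ m) :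
    dist p (γ a) < ε ∨ dist p (γ b) < ε ∨
      ¬ (dist p (γ a) + dist p (γ b) ≤ B * (b - a)) := by
  have hb_mem : b ∈ Icc (0 : ℝ) 1 := hb ▸ succ_div_two_pow_mem_Icc hk
  have hd_le : d ≤ dist p (γ b) :=
    hd ▸ Metric.infDist_le_dist_of_mem (mem_image_of_mem γ hb_mem)
  have hlen : B * (b - a) < max ε d / 2 := by
    have hba : b - a = 1 / 2 ^ m := by rw [ha, hb]; ring
    rw [hba, mul_one_div]
    exact div_two_pow_lt_half_of_div_lt (lt_max_of_lt_left hε) hm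
  rcases lt_or_ge (dist p (γ b)) ε with hb_near | hb_far
  · exact Or.inr (Or.inl hb_near)
  refine Or.inr (Or.inr fun hin => ?_)
  have hmax_le : max ε d ≤ dist p (γ b) := max_le hb_far hd_le
  linarith [dist_nonneg (x := p) (y := γ a), le_max_left ε d]

/-- Termination of the recursive winding-number evaluation: at a deep enough recursion level,
every subinterval either has an endpoint within tolerance `ε` of the query point `p`, or its
bounding ellipse excludes `p`. -/
theorem recursion_terminates (γ γ' : ℝ → ℝ × ℝ) (B : ℝ) (hB : 0 < B)
    (hderiv : ∀ t ∈ Set.Icc (0:ℝ) 1, HasDerivAt γ (γ' t) t)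
    (hbound : ∀ t ∈ Set.Icc (0:ℝ) 1, ‖γ' t‖ ≤ B)
    (p : ℝ × ℝ) (ε : ℝ) (hε : 0 < ε)
    (d : ℝ) (hd : d = Metric.infDist p (γ '' Set.Icc (0:ℝ) 1))
    (m : ℕ) (hm : 2 * B / max ε d < 2 ^ m)
    (k : ℕ) (hk : k < 2 ^ m)
    (a b : ℝ) (ha : a = (k : ℝ) / 2 ^ m) (hb : b = ((k : ℝ) + 1) / 2 ^ m) :
    dist p (γ a) < ε ∨ dist p (γ b) < ε ∨
      ¬ (dist p (γ a) + dist p (γ b) ≤ B * (b - a)) :=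
  recursion_terminates_general γ B p ε hε d hd m hm k hk a b ha hb
end

section
/- A simple (injective) loop on a cylinder has winding coefficient 0, 1, or −1 around the periodic direction: if γ : S¹ → S¹ × ℝ is a continuous injective loop, and n ∈ ℤ is the degree of the composition of γ with the projection to S¹, then |n| ≤ 1. -/
/-!
Lift the loop to the plane curve `t ↦ (F t, h t)`, where `h` is the `1`-periodic height of `γ`.
If `n ≥ 2` (the case `n ≤ -2` follows by replacing `F` with `-F`), let `v` be a maximum and
`w ∈ [v, v + 1]` a minimum of `h`. On the rectangle `[v, w] × [0, 1]` the map
`(x, c) ↦ (h (x + c) - h x, F (x + c) - F x - 1)` has boundary signs of Poincaré–Miranda type,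
so it vanishes: otherwise a continuous argument of it exists on the (simply connected)
rectangle, but along the boundary that argument would have to turn by a full `2π`.
A zero gives `γ (x + c) = γ x` with `c ∈ [0, 1]`, so injectivity forces `c = 0` or `c = 1`,
that is `0 = 1` or `n = 1`.
-/

open Set Function Real

theorem Convex.exists_continuousOn_exp_eq {E : Type*} [NormedAddCommGroup E] [NormedSpace ℝ E]
    {K : Set E} (hK : Convex ℝ K) {z : E → ℂ} (hz : ContinuousOn z K) (hz₀ : ∀ p ∈ K, z p ≠ 0) :
    ∃ L : E → ℂ, ContinuousOn L K ∧ ∀ p ∈ K, Complex.exp (L p) = z p := by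
  classical
  rcases K.eq_empty_or_nonempty with rfl | ⟨p₀, hp₀⟩
  · exact ⟨0, continuousOn_empty _, fun _ ↦ False.elim⟩
  have := hK.contractibleSpace ⟨p₀, hp₀⟩
  have := hK.locallyPathConnectedSpace
  obtain ⟨L, -, hL⟩ := (Complex.isCoveringMapOn_exp.existsUnique_continuousMap_lifts
    ⟨K.domRestrict z, hz.domRestrict⟩ (a₀ := ⟨p₀, hp₀⟩) (Complex.exp_log (hz₀ p₀ hp₀))
    fun p ↦ hz₀ p p.2).exists
  refine ⟨fun p ↦ if hp : p ∈ K then L ⟨p, hp⟩ else 0, ?_, fun p hp ↦ ?_⟩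
  · rw [continuousOn_iff_continuous_domRestrict]
    convert L.continuous with p
    simp
  · simpa [hp] using congrFun hL ⟨p, hp⟩

theorem IsPreconnected.lt_iff_lt_of_forall_ne {X : Type*} [TopologicalSpace X] {S : Set X}
    (hS : IsPreconnected S) {θ : X → ℝ} (hθ : ContinuousOn θ S) {y : ℝ}
    (hy : ∀ p ∈ S, θ p ≠ y) {p q : X} (hp : p ∈ S) (hq : q ∈ S) : θ p < y ↔ θ q < y := by
  suffices key : ∀ p ∈ S, ∀ q ∈ S, θ p < y → θ q < y from ⟨key p hp q hq, key q hq p hp⟩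
  intro p hp q hq hpy
  by_contra! hqy
  obtain ⟨r, hr, hry⟩ := hS.intermediate_value hp hq hθ ⟨hpy.le, hqy⟩
  exact hy r hr hry

theorem Function.Periodic.exists_mem_Icc_forall_le {h : ℝ → ℝ} {c : ℝ} (hp : Periodic h c)
    (hc : 0 < c) (hcont : Continuous h) (a : ℝ) : ∃ w ∈ Icc a (a + c), ∀ x, h w ≤ h x := by
  obtain ⟨w, hw, hmin⟩ := (isCompact_Icc (a := a) (b := a + c)).exists_isMinOn
    (nonempty_Icc.mpr (by linarith)) hcont.continuousOn
  refine ⟨w, hw, fun x ↦ ?_⟩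
  obtain ⟨y, hy, hxy⟩ := hp.exists_mem_Ico hc x a
  exact hxy ▸ hmin (Ico_subset_Icc_self hy)

theorem not_continuousOn_angle_of_boundary_signs {a b c d : ℝ} (hab : a ≤ b) (hcd : c ≤ d)
    {θ : ℝ × ℝ → ℝ} (hleft : ∀ p ∈ {a} ×ˢ Icc c d, sin (θ p) ≤ 0)
    (hbottom : ∀ p ∈ Icc a b ×ˢ {c}, 0 ≤ sin (θ p)) (hright : ∀ p ∈ {b} ×ˢ Icc c d, 0 ≤ sin (θ p))
    (htop : ∀ p ∈ Icc a b ×ˢ {d}, 0 ≤ sin (θ p))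
    (hcosc : cos (θ (a, c)) < 0) (hcosd : 0 < cos (θ (a, d))) :
    ¬ ContinuousOn θ (Icc a b ×ˢ Icc c d) := by
  intro hθ
  have hc : c ∈ Icc c d := left_mem_Icc.2 hcd
  have hd : d ∈ Icc c d := right_mem_Icc.2 hcd
  have ha : a ∈ Icc a b := left_mem_Icc.2 hab
  have hb : b ∈ Icc a b := right_mem_Icc.2 hab
  have hsin : sin (θ (a, c)) = 0 := le_antisymm (hleft _ ⟨rfl, hc⟩) (hbottom _ ⟨ha, rfl⟩)
  -- `sin (θ (a, c) ± π / 2) = ± cos (θ (a, c)) ≶ 0`, so `θ` cannot reach `θ (a, c) + π / 2`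
  -- along the bottom, right and top sides, nor `θ (a, c) - π / 2` along the left side.
  have across_horizontal {y : ℝ} (hy : y ∈ Icc c d) (hS : ∀ p ∈ Icc a b ×ˢ {y}, 0 ≤ sin (θ p)) :
      θ (a, y) < θ (a, c) + π / 2 ↔ θ (b, y) < θ (a, c) + π / 2 := by
    refine (isPreconnected_Icc.prod isPreconnected_singleton).lt_iff_lt_of_forall_ne
      (hθ.mono (prod_mono subset_rfl (singleton_subset_iff.2 hy))) (fun p hp hθp ↦ ?_)
      ⟨ha, rfl⟩ ⟨hb, rfl⟩
    have := hS p hp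
    rw [hθp, sin_add_pi_div_two] at this
    exact hcosc.not_ge this
  have across_vertical {x : ℝ} (hx : x ∈ Icc a b) {y : ℝ} (hy : ∀ p ∈ {x} ×ˢ Icc c d, θ p ≠ y) :
      θ (x, c) < y ↔ θ (x, d) < y :=
    (isPreconnected_singleton.prod isPreconnected_Icc).lt_iff_lt_of_forall_ne
      (hθ.mono (prod_mono (singleton_subset_iff.2 hx) subset_rfl)) hy ⟨rfl, hc⟩ ⟨rfl, hd⟩
  have above : θ (a, d) < θ (a, c) + π / 2 := by
    refine (across_horizontal hd htop).2 <| (across_vertical hb fun p hp hθp ↦ ?_).1 <|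
      (across_horizontal hc hbottom).1 (by linarith [pi_pos])
    have := hright p hp
    rw [hθp, sin_add_pi_div_two] at this
    exact hcosc.not_ge this
  have below : θ (a, c) - π / 2 ≤ θ (a, d) := by
    refine not_lt.1 <| (across_vertical ha fun p hp hθp ↦ ?_).not.1 (by linarith [pi_pos])
    have := hleft p hp
    rw [hθp, sin_sub_pi_div_two, neg_nonpos] at this
    exact hcosc.not_ge this
  have hcos : 0 ≤ cos (θ (a, d) - θ (a, c)) := cos_nonneg_of_mem_Icc ⟨by linarith, by linarith⟩
  rw [cos_sub, hsin, mul_zero, add_zero] at hcos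
  exact (mul_neg_of_pos_of_neg hcosd hcosc).not_ge hcos

theorem exists_common_zero_of_sign_on_boundary {a b c d : ℝ} (hab : a ≤ b) (hcd : c ≤ d)
    {f g : ℝ × ℝ → ℝ} (hf : ContinuousOn f (Icc a b ×ˢ Icc c d))
    (hg : ContinuousOn g (Icc a b ×ˢ Icc c d))
    (hleft : ∀ p ∈ {a} ×ˢ Icc c d, f p ≤ 0) (hbottom : ∀ p ∈ Icc a b ×ˢ {c}, 0 ≤ f p)
    (hright : ∀ p ∈ {b} ×ˢ Icc c d, 0 ≤ f p) (htop : ∀ p ∈ Icc a b ×ˢ {d}, 0 ≤ f p)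
    (hgc : g (a, c) < 0) (hgd : 0 < g (a, d)) :
    ∃ p ∈ Icc a b ×ˢ Icc c d, f p = 0 ∧ g p = 0 := by
  set R := Icc a b ×ˢ Icc c d
  by_contra! hR
  obtain ⟨L, hLc, hL⟩ := ((convex_Icc a b).prod (convex_Icc c d)).exists_continuousOn_exp_eq
    (z := fun p ↦ ⟨g p, f p⟩) (Complex.equivRealProdCLM.symm.continuous.comp_continuousOn
      (hg.prodMk hf)) fun p hp h₀ ↦ hR p hp congr(($h₀).im) congr(($h₀).re)
  have hg_eq {p : ℝ × ℝ} (hp : p ∈ R) : g p = exp (L p).re * cos (L p).im := by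
    rw [← Complex.exp_re, hL p hp]
  have hf_eq {p : ℝ × ℝ} (hp : p ∈ R) : f p = exp (L p).re * sin (L p).im := by
    rw [← Complex.exp_im, hL p hp]
  have hc : c ∈ Icc c d := left_mem_Icc.2 hcd
  have hd : d ∈ Icc c d := right_mem_Icc.2 hcd
  have ha : a ∈ Icc a b := left_mem_Icc.2 hab
  have hb : b ∈ Icc a b := right_mem_Icc.2 hab
  have horizontal {y : ℝ} (hy : y ∈ Icc c d) : Icc a b ×ˢ {y} ⊆ R :=
    prod_mono subset_rfl (singleton_subset_iff.2 hy)
  have vertical {x : ℝ} (hx : x ∈ Icc a b) : {x} ×ˢ Icc c d ⊆ R :=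
    prod_mono (singleton_subset_iff.2 hx) subset_rfl
  have sin_nonneg {p : ℝ × ℝ} (hp : p ∈ R) (hfp : 0 ≤ f p) : 0 ≤ sin (L p).im :=
    nonneg_of_mul_nonneg_right (hf_eq hp ▸ hfp) (exp_pos _)
  exact not_continuousOn_angle_of_boundary_signs hab hcd (θ := fun p ↦ (L p).im)
    (fun p hp ↦ nonpos_of_mul_nonpos_right (hf_eq (vertical ha hp) ▸ hleft p hp) (exp_pos _))
    (fun p hp ↦ sin_nonneg (horizontal hc hp) (hbottom p hp))
    (fun p hp ↦ sin_nonneg (vertical hb hp) (hright p hp))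
    (fun p hp ↦ sin_nonneg (horizontal hd hp) (htop p hp))
    (neg_of_mul_neg_right (hg_eq (p := (a, c)) ⟨ha, hc⟩ ▸ hgc) (exp_pos _).le)
    (pos_of_mul_pos_right (hg_eq (p := (a, d)) ⟨ha, hd⟩ ▸ hgd) (exp_pos _).le)
    (Complex.continuous_im.comp_continuousOn hLc)

theorem exists_horizontal_chord {F h : ℝ → ℝ} {n j : ℝ} (hF : Continuous F) (hh : Continuous h)
    (hFn : ∀ t, F (t + 1) = F t + n) (hper : Periodic h 1) (hj : 0 < j) (hjn : j < n) :
    ∃ x c, c ∈ Icc (0 : ℝ) 1 ∧ h (x + c) = h x ∧ F (x + c) = F x + j := by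
  obtain ⟨v, -, hv⟩ :=
    (hper.comp Neg.neg).exists_mem_Icc_forall_le one_pos (continuous_neg.comp hh) 0
  simp only [comp_apply, neg_le_neg_iff] at hv
  obtain ⟨w, hvw, hw⟩ := hper.exists_mem_Icc_forall_le one_pos hh v
  obtain ⟨⟨x, c⟩, ⟨-, hc⟩, hhx, hFx⟩ := exists_common_zero_of_sign_on_boundary hvw.1 zero_le_one
    (f := fun p ↦ h (p.1 + p.2) - h p.1) (g := fun p ↦ F (p.1 + p.2) - F p.1 - j)
    (by fun_prop) (by fun_prop)
    (by rintro ⟨x, y⟩ ⟨rfl, -⟩; linarith [hv (x + y)])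
    (by rintro ⟨x, y⟩ ⟨-, rfl⟩; simp)
    (by rintro ⟨x, y⟩ ⟨rfl, -⟩; linarith [hw (x + y)])
    (by rintro ⟨x, y⟩ ⟨-, rfl⟩; simp [hper x])
    (by simpa using hj) (by simpa [hFn] using hjn)
  exact ⟨x, c, hc, by linarith, by linarith⟩

theorem abs_le_one_of_lift_injective {F h : ℝ → ℝ} {n : ℤ} (hF : Continuous F)
    (hh : Continuous h) (hFn : ∀ t, F (t + 1) = F t + n) (hper : Periodic h 1)
    (hinj : ∀ s t : ℝ, (F s : AddCircle (1 : ℝ)) = F t → h s = h t →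
      (s : AddCircle (1 : ℝ)) = t) :
    |n| ≤ 1 := by
  wlog hn : 0 < n generalizing F n
  · rcases (not_lt.1 hn).eq_or_lt with rfl | hn
    · simp
    refine abs_neg n ▸ this hF.neg (fun t ↦ by simp only [Pi.neg_apply, hFn, Int.cast_neg]; ring)
      (fun s t hst ↦ hinj s t ?_) (by omega)
    simpa using congrArg Neg.neg hst
  rw [abs_of_pos hn]
  by_contra! hn₁
  obtain ⟨x, c, hc, hhx, hFx⟩ := exists_horizontal_chord hF hh hFn hper one_pos
    (by exact_mod_cast hn₁)
  obtain ⟨m, rfl⟩ : ∃ m : ℤ, (m : ℝ) = c := by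
    have := hinj (x + c) x (by simp [hFx]) hhx
    simpa [AddSubgroup.mem_zmultiples_iff] using sub_eq_zero.2 this
  obtain rfl | rfl : m = 0 ∨ m = 1 := by
    have : 0 ≤ m := by exact_mod_cast hc.1
    have : m ≤ 1 := by exact_mod_cast hc.2
    omega
  · simp at hFx
  · rw [Int.cast_one, hFn] at hFx
    have : n = 1 := by exact_mod_cast add_left_cancel hFx
    omega

/-- A simple (injective) loop on the cylinder `S¹ × ℝ` has degree `0`, `1` or `−1` around the
periodic direction: `|n| ≤ 1`, where `n` is the degree of its projection to `S¹`. -/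
theorem simple_cylinder_loop_degree (γ : AddCircle (1:ℝ) → AddCircle (1:ℝ) × ℝ)
    (hcont : Continuous γ) (hinj : Function.Injective γ)
    (n : ℤ) (F : ℝ → ℝ) (hF : Continuous F)
    (hlift : ∀ t : ℝ, ((F t : AddCircle (1:ℝ))) = (γ (t : AddCircle (1:ℝ))).1)
    (hdeg : ∀ t : ℝ, F (t + 1) = F t + n) :
    |n| ≤ 1 :=
  abs_le_one_of_lift_injective hF (h := fun t ↦ (γ t).2)
    (continuous_snd.comp (hcont.comp (AddCircle.continuous_mk' 1))) hdeg
    (fun t ↦ by simp only [AddCircle.coe_add_period])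
    fun s t h₁ h₂ ↦ hinj (Prod.ext (by rw [← hlift, ← hlift, h₁]) h₂)
end

section
/- The homology class of a simple closed curve on the torus has coprime coordinates: if γ is an injective continuous loop on the torus T² = ℝ²/ℤ² representing the class (n,m) ∈ H₁(T²;ℤ) ≅ ℤ² with (n,m) ≠ (0,0), then gcd(n,m) = 1. -/
/-- `IsTorusClass γ n m` : the loop `γ` on the torus `T² = ℝ²/ℤ²` has homology class `(n, m)`,
witnessed by continuous lifts of its two coordinates with monodromy `n` and `m`. -/
def IsTorusClass (γ : AddCircle (1:ℝ) → AddCircle (1:ℝ) × AddCircle (1:ℝ)) (n m : ℤ) : Prop :=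
  ∃ F G : ℝ → ℝ, Continuous F ∧ Continuous G ∧
    (∀ t : ℝ, γ (t : AddCircle (1:ℝ)) = ((F t : AddCircle (1:ℝ)), (G t : AddCircle (1:ℝ)))) ∧
    (∀ t : ℝ, F (t + 1) = F t + n) ∧ (∀ t : ℝ, G (t + 1) = G t + m)

/-!
Write `(n, m) = g • (n', m')` with `n', m'` coprime, pick `x n' + y m' = 1` and pass from the lift
`(F, G)` of `γ` to `Φ = x F + y G` and `Λ = m' F - n' G`: over one period `Φ` grows by `g ≥ 1`
while `Λ` is periodic. Two climbers descending from a maximum of `Λ` to the next minimum, one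
forwards and one backwards along the period, can stay at equal heights; somewhere on the way their
`Φ`-values differ by exactly `1`, which gives `s, t` with `(F, G) t = (F, G) s + (n', m')`. Then
`γ s = γ t`, so `t - s = j ∈ ℤ` by injectivity, and comparing `Φ` gives `j g = 1`.

The climbers are built from approximations: cut the graph of `Λ` into steps of height `h`. The index
pairs of the two step sequences lying on a common level form a graph in which every vertex except
the two extreme corners has even degree, so the corners are joined by a path; along it
`|Λ s - Λ t| ≤ 4 h`, and compactness lets `h → 0`.
-/

open Set Filter Topology Finset

namespace SimpleGraph

theorem degree_induce_finset {α : Type*} (G : SimpleGraph α) [DecidableRel G.Adj]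
    (B : Finset α) (p : (B : Set α)) [Fintype ((G.induce (B : Set α)).neighborSet p)] :
    (G.induce (B : Set α)).degree p = #{q ∈ B | G.Adj p q} := by
  classical
  rw [← card_neighborFinset_eq_degree, ← card_map (Function.Embedding.subtype _)]
  congr 1
  ext q
  simp [and_comm]

variable {V : Type*} [Fintype V] (G : SimpleGraph V) [DecidableRel G.Adj]

theorem reachable_of_odd_degree {x y : V} (hx : Odd (G.degree x))
    (heven : ∀ z, z ≠ x → z ≠ y → Even (G.degree z)) : G.Reachable x y := by
  classical
  -- the handshake lemma applied to the edges of the component of `x`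
  let H : SimpleGraph V :=
    { Adj := fun a b => G.Adj a b ∧ G.Reachable x a
      symm := ⟨fun a b h => ⟨h.1.symm, h.2.trans h.1.reachable⟩⟩
      loopless := ⟨fun a h => G.loopless.irrefl a h.1⟩ }
  have hdeg : ∀ z, H.degree z = if G.Reachable x z then G.degree z else 0 := by
    intro z
    simp only [← card_neighborFinset_eq_degree, neighborFinset_eq_filter]
    split_ifs with hz <;> simp [H, hz]
  obtain ⟨z, hzx, hz⟩ := H.exists_ne_odd_degree_of_exists_odd_degree x (by simpa [hdeg] using hx)
  rw [hdeg] at hz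
  split_ifs at hz with hxz
  · by_contra hxy
    exact Nat.not_even_iff_odd.mpr hz (heven z hzx fun hzy => hxy (hzy ▸ hxz))
  · exact absurd hz (by decide)

end SimpleGraph

structure IsBracketedWalk (N : ℕ) (v : ℕ → ℤ) : Prop where
  abs_succ_sub : ∀ k < N, |v (k + 1) - v k| = 1
  between : ∀ k, 0 < k → k < N → v N < v k ∧ v k < v 0

namespace IsBracketedWalk

variable {N : ℕ} {v : ℕ → ℤ}

theorem pos_and_one_eq (hv : IsBracketedWalk N v) (hlt : v N < v 0) : 0 < N ∧ v 1 = v 0 - 1 := by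
  have hN : 0 < N := Nat.pos_of_ne_zero (by rintro rfl; exact hlt.false)
  have h1 := hv.abs_succ_sub 0 hN
  rw [zero_add, abs_eq zero_le_one] at h1
  rcases Nat.lt_or_ge 1 N with h | h
  · have := hv.between 1 one_pos h
    omega
  · obtain rfl : N = 1 := by omega
    omega

theorem eq_zero_or_eq_or_between (hv : IsBracketedWalk N v) {k : ℕ} (hk : k ≤ N) :
    k = 0 ∨ k = N ∨ 0 < k ∧ k < N ∧ v N < v k ∧ v k < v 0 := by
  rcases Nat.eq_zero_or_pos k with h | h₀
  · exact .inl h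
  rcases hk.lt_or_eq with hN | h
  · exact .inr (.inr ⟨h₀, hN, hv.between k h₀ hN⟩)
  · exact .inr (.inl h)

end IsBracketedWalk

def levelGraph (N N' : ℕ) (v w : ℕ → ℤ) : SimpleGraph (ℕ × ℕ) where
  Adj p q := p.1 ≤ N ∧ p.2 ≤ N' ∧ q.1 ≤ N ∧ q.2 ≤ N' ∧ v p.1 = w p.2 ∧ v q.1 = w q.2 ∧
    (p.1 + 1 = q.1 ∨ q.1 + 1 = p.1) ∧ (p.2 + 1 = q.2 ∨ q.2 + 1 = p.2)
  symm := ⟨fun p q h => by omega⟩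
  loopless := ⟨fun p h => by omega⟩

instance (N N' : ℕ) (v w : ℕ → ℤ) : DecidableRel (levelGraph N N' v w).Adj :=
  fun _ _ => by dsimp only [levelGraph]; infer_instance

theorem even_card_filter_eq_of_abs_sub {v w : ℕ → ℤ} {k l : ℕ} (hk : 0 < k) (hl : 0 < l)
    (hv₁ : |v (k - 1) - v k| = 1) (hv₂ : |v (k + 1) - v k| = 1)
    (hw₁ : |w (l - 1) - v k| = 1) (hw₂ : |w (l + 1) - v k| = 1) :
    Even #{q ∈ ({k - 1, k + 1} : Finset ℕ) ×ˢ {l - 1, l + 1} | v q.1 = w q.2} := by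
  rw [card_filter, sum_product, sum_pair (by omega), sum_pair (by omega), sum_pair (by omega),
    Nat.even_iff]
  rw [abs_eq zero_le_one] at hv₁ hv₂ hw₁ hw₂
  dsimp only
  split_ifs <;> omega

section LevelGraph

variable {N N' : ℕ} {v w : ℕ → ℤ}

theorem mem_range_prod_range_iff {q : ℕ × ℕ} :
    q ∈ range (N + 1) ×ˢ range (N' + 1) ↔ q.1 ≤ N ∧ q.2 ≤ N' := by
  simp

theorem filter_levelGraph_adj_zero (hv1 : v 1 = w 1) (hN : 0 < N) (hN' : 0 < N')
    (h0 : v 0 = w 0) :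
    {q ∈ range (N + 1) ×ˢ range (N' + 1) | (levelGraph N N' v w).Adj (0, 0) q} = {(1, 1)} := by
  ext ⟨k, l⟩
  simp only [mem_filter, mem_range_prod_range_iff, Finset.mem_singleton, Prod.mk.injEq]
  simp only [levelGraph]
  constructor
  · omega
  · rintro ⟨rfl, rfl⟩
    omega

theorem even_card_filter_levelGraph_adj (hv : IsBracketedWalk N v) (hw : IsBracketedWalk N' w)
    (h0 : v 0 = w 0) (hN : v N = w N') (hlt : v N < v 0) {k l : ℕ} (hk : k ≤ N) (hl : l ≤ N')
    (h00 : ¬(k = 0 ∧ l = 0)) (hNN : ¬(k = N ∧ l = N')) :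
    Even #{q ∈ range (N + 1) ×ˢ range (N' + 1) | (levelGraph N N' v w).Adj (k, l) q} := by
  by_cases hlev : v k = w l
  swap
  · rw [show {q ∈ range (N + 1) ×ˢ range (N' + 1) | (levelGraph N N' v w).Adj (k, l) q} = ∅ by
      ext q
      simp [levelGraph, hlev]]
    exact ⟨0, rfl⟩
  obtain ⟨hk, hl⟩ : (0 < k ∧ k < N) ∧ (0 < l ∧ l < N') := by
    rcases hv.eq_zero_or_eq_or_between hk with rfl | rfl | hk <;>
    rcases hw.eq_zero_or_eq_or_between hl with rfl | rfl | hl <;> omega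
  rw [show {q ∈ range (N + 1) ×ˢ range (N' + 1) | (levelGraph N N' v w).Adj (k, l) q} =
      {q ∈ ({k - 1, k + 1} : Finset ℕ) ×ˢ {l - 1, l + 1} | v q.1 = w q.2} by
    ext ⟨i, j⟩
    simp only [mem_filter, mem_product, Finset.mem_range, Finset.mem_insert, Finset.mem_singleton]
    simp only [levelGraph]
    omega]
  have hk₁ := hv.abs_succ_sub (k - 1) (by omega)
  have hl₁ := hw.abs_succ_sub (l - 1) (by omega)
  rw [Nat.sub_add_cancel hk.1, abs_sub_comm] at hk₁
  rw [Nat.sub_add_cancel hl.1, abs_sub_comm] at hl₁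
  exact even_card_filter_eq_of_abs_sub hk.1 hl.1 hk₁ (hv.abs_succ_sub k hk.2) (hlev ▸ hl₁)
    (hlev ▸ hw.abs_succ_sub l hl.2)

theorem levelGraph_reachable (hv : IsBracketedWalk N v) (hw : IsBracketedWalk N' w)
    (h0 : v 0 = w 0) (hN : v N = w N') (hlt : v N < v 0) :
    (levelGraph N N' v w).Reachable (0, 0) (N, N') := by
  classical
  obtain ⟨hN0, hv1⟩ := hv.pos_and_one_eq hlt
  obtain ⟨hN'0, hw1⟩ := hw.pos_and_one_eq (h0 ▸ hN ▸ hlt)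
  set B : Finset (ℕ × ℕ) := range (N + 1) ×ˢ range (N' + 1)
  let H := (levelGraph N N' v w).induce (B : Set (ℕ × ℕ))
  let x : (B : Set (ℕ × ℕ)) := ⟨(0, 0), mem_range_prod_range_iff.2 ⟨N.zero_le, N'.zero_le⟩⟩
  let y : (B : Set (ℕ × ℕ)) := ⟨(N, N'), mem_range_prod_range_iff.2 ⟨le_rfl, le_rfl⟩⟩
  have hodd : Odd (H.degree x) := by
    rw [SimpleGraph.degree_induce_finset, filter_levelGraph_adj_zero (by omega) hN0 hN'0 h0]
    exact odd_one
  have heven : ∀ p, p ≠ x → p ≠ y → Even (H.degree p) := by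
    rintro ⟨⟨k, l⟩, hkl⟩ h00 hNN
    simp only [x, y, ne_eq, Subtype.mk.injEq, Prod.mk.injEq] at h00 hNN
    rw [Finset.mem_coe, mem_range_prod_range_iff] at hkl
    rw [SimpleGraph.degree_induce_finset]
    exact even_card_filter_levelGraph_adj hv hw h0 hN hlt hkl.1 hkl.2 h00 hNN
  exact (H.reachable_of_odd_degree hodd heven).map (SimpleGraph.Embedding.induce _).toHom

end LevelGraph

/-- The levels `v 0 = 1` and `v N` are sentinels, one step above `f a` and one step below every other
level: they leave the two corners as the only index pairs with an odd number of neighbours in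
`levelGraph`. -/
structure IsStaircase (f : ℝ → ℝ) (a b h : ℝ) (N : ℕ) (u : ℕ → ℝ) (v : ℕ → ℤ) : Prop where
  u_zero : u 0 = a
  u_last : u N = b
  mem_Icc : ∀ k ≤ N, u k ∈ Icc a b
  v_zero : v 0 = 1
  walk : IsBracketedWalk N v
  abs_sub_level_le : ∀ k < N, ∀ s ∈ uIcc (u k) (u (k + 1)), |f s - (f a + h * v k)| ≤ h

section Staircase

variable {f : ℝ → ℝ} {a b h x : ℝ}

theorem IsStaircase.abs_sub_le_two_mul {N : ℕ} {u : ℕ → ℝ} {v : ℕ → ℤ}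
    (S : IsStaircase f a b h N u v) {k k' : ℕ} (hk : k ≤ N) (hk' : k' ≤ N)
    (hkk' : k + 1 = k' ∨ k' + 1 = k) {s : ℝ} (hs : s ∈ uIcc (u k) (u k')) :
    s ∈ Icc a b ∧ |f s - (f a + h * v k)| ≤ 2 * h := by
  refine ⟨uIcc_subset_Icc (S.mem_Icc k hk) (S.mem_Icc k' hk') hs, ?_⟩
  rcases hkk' with rfl | rfl
  · have := S.abs_sub_level_le k (by omega) s hs
    linarith [(abs_nonneg _).trans this]
  · have hs' := S.abs_sub_level_le k' (by omega) s (uIcc_comm (u k') _ ▸ hs)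
    have hstep : |(f a + h * v k') - (f a + h * v (k' + 1))| = h := by
      rw [add_sub_add_left_eq_sub, ← mul_sub, abs_mul, abs_of_nonneg ((abs_nonneg _).trans hs'),
        ← Int.cast_sub, ← Int.cast_abs, abs_sub_comm, S.walk.abs_succ_sub k' (by omega),
        Int.cast_one, mul_one]
    linarith [abs_sub_le (f s) (f a + h * v k') (f a + h * v (k' + 1))]

def hitSet (f : ℝ → ℝ) (b h x : ℝ) : Set ℝ := {t ∈ Icc x b | |f t - f x| = h}

open Classical in
noncomputable def nextHit (f : ℝ → ℝ) (b h x : ℝ) : ℝ :=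
  if (hitSet f b h x).Nonempty then sInf (hitSet f b h x) else b

theorem bddBelow_hitSet : BddBelow (hitSet f b h x) := ⟨x, fun _ ht => ht.1.1⟩

theorem exists_mem_hitSet_le (hf : ContinuousOn f (Icc a b)) (hax : a ≤ x) {s : ℝ}
    (hs : s ∈ Icc x b) (hh : 0 ≤ h) (hle : h ≤ |f s - f x|) : ∃ t ∈ hitSet f b h x, t ≤ s := by
  have hg : ContinuousOn (fun t => |f t - f x|) (Icc x s) :=
    ((hf.mono (Icc_subset_Icc hax hs.2)).sub continuousOn_const).abs
  obtain ⟨t, ht, hts⟩ := intermediate_value_Icc hs.1 hg ⟨by simpa using hh, hle⟩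
  exact ⟨t, ⟨⟨ht.1, ht.2.trans hs.2⟩, hts⟩, ht.2⟩

theorem nextHit_mem_Icc (hxb : x ≤ b) : nextHit f b h x ∈ Icc x b := by
  unfold nextHit
  split_ifs with hne
  · obtain ⟨t, ht⟩ := hne
    exact ⟨le_csInf ⟨t, ht⟩ fun t ht => ht.1.1, (csInf_le bddBelow_hitSet ht).trans ht.1.2⟩
  · exact ⟨hxb, le_rfl⟩

theorem abs_sub_le_of_mem_Icc_nextHit (hf : ContinuousOn f (Icc a b)) (hx : x ∈ Icc a b)
    (hh : 0 ≤ h) {s : ℝ} (hs : s ∈ Icc x (nextHit f b h x)) : |f s - f x| ≤ h := by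
  by_contra! hlt
  obtain ⟨t, ht, hts⟩ := exists_mem_hitSet_le hf hx.1
    ⟨hs.1, hs.2.trans (nextHit_mem_Icc hx.2).2⟩ hh hlt.le
  have hst : s ≤ t := by
    refine hs.2.trans ?_
    rw [nextHit, if_pos ⟨t, ht⟩]
    exact csInf_le bddBelow_hitSet ht
  exact hlt.ne' (le_antisymm hts hst ▸ ht.2)

theorem abs_nextHit_sub (hf : ContinuousOn f (Icc a b)) (hax : a ≤ x)
    (hne : (hitSet f b h x).Nonempty) : |f (nextHit f b h x) - f x| = h := by
  have hclosed : IsClosed (hitSet f b h x) :=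
    ((hf.mono (Icc_subset_Icc_left hax)).sub continuousOn_const).abs.preimage_isClosed_of_isClosed
      isClosed_Icc isClosed_singleton
  rw [nextHit, if_pos hne]
  exact (hclosed.csInf_mem hne bddBelow_hitSet).2

theorem abs_sub_lt_of_not_nonempty_hitSet (hf : ContinuousOn f (Icc a b)) (hx : x ∈ Icc a b)
    (hh : 0 ≤ h) (hne : ¬ (hitSet f b h x).Nonempty) : |f b - f x| < h := by
  refine lt_of_le_of_ne (abs_sub_le_of_mem_Icc_nextHit hf hx hh ?_) fun heq =>
    hne ⟨b, ⟨hx.2, le_rfl⟩, heq⟩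
  rw [nextHit, if_neg hne]
  exact ⟨hx.2, le_rfl⟩

theorem nextHit_iterate_mem_Icc (hab : a ≤ b) (k : ℕ) : (nextHit f b h)^[k] a ∈ Icc a b := by
  induction k with
  | zero => exact ⟨le_rfl, hab⟩
  | succ k ih =>
    rw [Function.iterate_succ_apply']
    exact ⟨ih.1.trans (nextHit_mem_Icc ih.2).1, (nextHit_mem_Icc ih.2).2⟩

theorem exists_not_nonempty_hitSet_nextHit_iterate (hf : ContinuousOn f (Icc a b)) (hab : a ≤ b)
    (hh : 0 < h) : ∃ N, ¬ (hitSet f b h ((nextHit f b h)^[N] a)).Nonempty := by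
  by_contra! hall
  set p : ℕ → ℝ := fun k => (nextHit f b h)^[k] a
  have hmem : ∀ k, p k ∈ Icc a b := nextHit_iterate_mem_Icc hab
  have hsucc : ∀ k, p (k + 1) = nextHit f b h (p k) := fun k => Function.iterate_succ_apply' ..
  have hmono : Monotone p := monotone_nat_of_le_succ fun k =>
    hsucc k ▸ (nextHit_mem_Icc (hmem k).2).1
  -- a bounded monotone sequence converges, so `f` cannot keep jumping by `h` along it
  have hlim := tendsto_atTop_ciSup hmono ⟨b, by rintro _ ⟨k, rfl⟩; exact (hmem k).2⟩
  have hL := isClosed_Icc.mem_of_tendsto hlim (.of_forall hmem)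
  have hfp : Tendsto (fun k => f (p k)) atTop (𝓝 (f (⨆ k, p k))) :=
    (hf _ hL).tendsto.comp (tendsto_nhdsWithin_iff.2 ⟨hlim, .of_forall hmem⟩)
  have hjump := ((hfp.comp (tendsto_add_atTop_nat 1)).sub hfp).abs
  have hconst : ∀ k, |f (p (k + 1)) - f (p k)| = h := fun k =>
    hsucc k ▸ abs_nextHit_sub hf (hmem k).1 (hall k)
  simp only [Function.comp_def, hconst, sub_self, abs_zero] at hjump
  exact hh.ne' (tendsto_nhds_unique tendsto_const_nhds hjump)

theorem exists_int_levels_nextHit_iterate (hf : ContinuousOn f (Icc a b)) (hab : a ≤ b)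
    (hh : 0 < h) {N₀ : ℕ} (hne : ∀ k < N₀, (hitSet f b h ((nextHit f b h)^[k] a)).Nonempty) :
    ∃ j : ℕ → ℤ, ∀ k ≤ N₀, f ((nextHit f b h)^[k] a) = f a + h * j k := by
  suffices ∀ k, ∃ j : ℤ, k ≤ N₀ → f ((nextHit f b h)^[k] a) = f a + h * j by
    choose j hj using this
    exact ⟨j, hj⟩
  intro k
  induction k with
  | zero => exact ⟨0, fun _ => by simp⟩
  | succ k ih =>
    obtain ⟨j, hj⟩ := ih
    by_cases hk : k + 1 ≤ N₀
    · have hjump := abs_nextHit_sub hf (nextHit_iterate_mem_Icc hab k).1 (hne k hk)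
      rw [← Function.iterate_succ_apply' (nextHit f b h), abs_eq hh.le, hj (by omega)] at hjump
      rcases hjump with hjump | hjump
      · exact ⟨j + 1, fun _ => by push_cast; linarith⟩
      · exact ⟨j - 1, fun _ => by push_cast; linarith⟩
    · exact ⟨0, fun h => absurd h hk⟩

theorem abs_sub_eq_one_of_abs_add_mul_sub {c : ℝ} (hh : 0 < h) {i j : ℤ}
    (H : |(c + h * i) - (c + h * j)| = h) : |i - j| = 1 := by
  rw [add_sub_add_left_eq_sub, ← mul_sub, abs_mul, abs_of_pos hh, mul_eq_left₀ hh.ne'] at H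
  exact_mod_cast H

theorem ceil_le_and_nonpos_of_add_mul_mem_Icc {c m : ℝ} (hh : 0 < h) {j : ℤ}
    (H : c + h * j ∈ Icc m c) : ⌈(m - c) / h⌉ ≤ j ∧ j ≤ 0 := by
  refine ⟨Int.ceil_le.2 ?_, ?_⟩
  · rw [div_le_iff₀ hh]
    linarith [H.1]
  · have : (j : ℝ) ≤ 0 := by nlinarith [H.2]
    exact_mod_cast this

theorem eq_ceil_of_abs_sub_add_mul_lt {c m : ℝ} (hh : 0 < h) {j : ℤ} (H₁ : m ≤ c + h * j)
    (H₂ : |m - (c + h * j)| < h) : j = ⌈(m - c) / h⌉ := by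
  refine (Int.ceil_eq_iff.2 ⟨?_, ?_⟩).symm
  · rw [lt_div_iff₀ hh]
    linarith [(abs_lt.1 H₂).1]
  · rw [div_le_iff₀ hh]
    linarith

theorem isStaircase_pad {p : ℕ → ℝ} {j : ℕ → ℤ} {N₀ : ℕ} {J : ℤ} (hh : 0 < h) (hp0 : p 0 = a)
    (hpN : p (N₀ + 1) = b) (hmem : ∀ k, p k ∈ Icc a b)
    (hosc : ∀ k ≤ N₀, ∀ s ∈ uIcc (p k) (p (k + 1)), |f s - f (p k)| ≤ h)
    (hj : ∀ k ≤ N₀, f (p k) = f a + h * j k) (hstep : ∀ k < N₀, |j (k + 1) - j k| = 1)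
    (hbetween : ∀ k ≤ N₀, J ≤ j k ∧ j k ≤ 0) (hlast : j N₀ = J) :
    IsStaircase f a b h (N₀ + 2) (fun k => p (k - 1))
      (fun k => if k = 0 then 1 else if k = N₀ + 2 then J - 1 else j (k - 1)) := by
  have hj0 : j 0 = 0 := by simpa [hp0, hh.ne'] using hj 0 (Nat.zero_le _)
  refine ⟨hp0, hpN, fun k _ => hmem _, rfl, ⟨?_, ?_⟩, ?_⟩
  · rintro (_ | k) hk
    · simp [hj0]
    · rcases (show k < N₀ ∨ k = N₀ by omega) with hk | rfl
      · simpa [show k ≠ N₀ by omega, show k ≠ N₀ + 1 by omega] using hstep k hk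
      · simp [hlast]
  · rintro k hk₀ hk
    have := hbetween (k - 1) (by omega)
    simp only [show k ≠ 0 by omega, show k ≠ N₀ + 2 by omega, if_false, if_true]
    omega
  · rintro (_ | k) hk s hs
    · obtain rfl : s = a := by simpa [hp0] using hs
      simp [abs_of_pos hh]
    · simp only [Nat.add_sub_cancel, show k + 1 ≠ N₀ + 2 by omega, if_false,
        Nat.add_one_ne_zero, ← hj k (by omega)] at hs ⊢
      exact hosc k (by omega) s hs

theorem exists_isStaircase (hf : ContinuousOn f (Icc a b)) (hab : a ≤ b) (hh : 0 < h)
    (hmaps : MapsTo f (Icc a b) (Icc (f b) (f a))) :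
    ∃ N u v, IsStaircase f a b h N u v ∧ v N = ⌈(f b - f a) / h⌉ - 1 := by
  classical
  set p : ℕ → ℝ := fun k => (nextHit f b h)^[k] a
  have hmem : ∀ k, p k ∈ Icc a b := nextHit_iterate_mem_Icc hab
  have hsucc : ∀ k, p (k + 1) = nextHit f b h (p k) := fun k => Function.iterate_succ_apply' ..
  have hstop := exists_not_nonempty_hitSet_nextHit_iterate hf hab hh
  set N₀ := Nat.find hstop
  have hne : ∀ k < N₀, (hitSet f b h (p k)).Nonempty := fun k hk =>
    not_not.1 (Nat.find_min hstop hk)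
  obtain ⟨j, hj⟩ := exists_int_levels_nextHit_iterate hf hab hh hne
  refine ⟨N₀ + 2, _, _, isStaircase_pad (J := ⌈(f b - f a) / h⌉) hh rfl ?_ hmem ?_ hj ?_ ?_ ?_,
    by simp⟩
  · rw [hsucc, nextHit, if_neg (Nat.find_spec hstop)]
  · intro k _ s hs
    rw [hsucc, uIcc_of_le (nextHit_mem_Icc (hmem k).2).1] at hs
    exact abs_sub_le_of_mem_Icc_nextHit hf (hmem k) hh.le hs
  · intro k hk
    refine abs_sub_eq_one_of_abs_add_mul_sub (c := f a) hh ?_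
    rw [← hj k hk.le, ← hj (k + 1) hk, Function.iterate_succ_apply']
    exact abs_nextHit_sub hf (hmem k).1 (hne k hk)
  · exact fun k hk => ceil_le_and_nonpos_of_add_mul_mem_Icc hh (hj k hk ▸ hmaps (hmem k))
  · have hlt := abs_sub_lt_of_not_nonempty_hitSet hf (hmem N₀) hh.le (Nat.find_spec hstop)
    rw [hj N₀ le_rfl] at hlt
    exact eq_ceil_of_abs_sub_add_mul_lt hh (hj N₀ le_rfl ▸ (hmaps (hmem N₀)).1) hlt

end Staircase

section MountainClimbing

variable {f₁ f₂ : ℝ → ℝ} {a b c d h : ℝ}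

theorem mem_connectedComponentIn_of_isStaircase {N N' : ℕ} {u u' : ℕ → ℝ} {v w : ℕ → ℤ}
    (S₁ : IsStaircase f₁ a b h N u v) (S₂ : IsStaircase f₂ c d h N' u' w) (hh : 0 ≤ h)
    (hac : f₁ a = f₂ c) (hN : v N = w N') (hlt : v N < 1) :
    (b, d) ∈ connectedComponentIn {p ∈ Icc a b ×ˢ Icc c d | |f₁ p.1 - f₂ p.2| ≤ 4 * h} (a, c) := by
  set K := {p ∈ Icc a b ×ˢ Icc c d | |f₁ p.1 - f₂ p.2| ≤ 4 * h}
  have hreach := levelGraph_reachable S₁.walk S₂.walk (S₁.v_zero.trans S₂.v_zero.symm) hN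
    (S₁.v_zero ▸ hlt)
  have hK : (a, c) ∈ K :=
    ⟨⟨S₁.u_zero ▸ S₁.mem_Icc 0 N.zero_le, S₂.u_zero ▸ S₂.mem_Icc 0 N'.zero_le⟩, by simp [hac, hh]⟩
  suffices ∀ q, Relation.ReflTransGen (levelGraph N N' v w).Adj (0, 0) q →
      (u q.1, u' q.2) ∈ connectedComponentIn K (a, c) by
    simpa [S₁.u_last, S₂.u_last] using
      this _ ((SimpleGraph.reachable_iff_reflTransGen _ _).1 hreach)
  intro q hq
  induction hq with
  | refl => simpa [S₁.u_zero, S₂.u_zero] using mem_connectedComponentIn hK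
  | @tail q q' _ hadj ih =>
    obtain ⟨hq₁, hq₂, hq'₁, hq'₂, hlev, -, h₁, h₂⟩ := hadj
    have hseg : segment ℝ (u q.1, u' q.2) (u q'.1, u' q'.2) ⊆ K := by
      intro p hp
      obtain ⟨hp₁, hp₂⟩ := Prod.segment_subset _ _ hp
      rw [segment_eq_uIcc] at hp₁ hp₂
      obtain ⟨hs, hs'⟩ := S₁.abs_sub_le_two_mul hq₁ hq'₁ h₁ hp₁
      obtain ⟨ht, ht'⟩ := S₂.abs_sub_le_two_mul hq₂ hq'₂ h₂ hp₂
      rw [hlev, hac] at hs'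
      refine ⟨⟨hs, ht⟩, ?_⟩
      linarith [abs_sub_le (f₁ p.1) (f₂ c + h * w q.2) (f₂ p.2),
        abs_sub_comm (f₂ c + h * w q.2) (f₂ p.2)]
    have := (convex_segment _ _).isPreconnected.subset_connectedComponentIn
      (left_mem_segment ℝ _ _) hseg
    rw [← connectedComponentIn_eq ih] at this
    exact this (right_mem_segment ℝ _ _)

theorem mountain_climbing {χ : ℝ × ℝ → ℝ} (hf₁ : ContinuousOn f₁ (Icc a b))
    (hf₂ : ContinuousOn f₂ (Icc c d)) (hab : a ≤ b) (hcd : c ≤ d) (hac : f₁ a = f₂ c)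
    (hbd : f₁ b = f₂ d) (h₁ : MapsTo f₁ (Icc a b) (Icc (f₁ b) (f₁ a)))
    (h₂ : MapsTo f₂ (Icc c d) (Icc (f₂ d) (f₂ c))) (hχ : ContinuousOn χ (Icc a b ×ˢ Icc c d))
    (hχac : 0 ≤ χ (a, c)) (hχbd : χ (b, d) ≤ 0) :
    ∃ p ∈ Icc a b ×ˢ Icc c d, f₁ p.1 = f₂ p.2 ∧ χ p = 0 := by
  set Z := {p ∈ Icc a b ×ˢ Icc c d | χ p = 0}
  have hZ : IsCompact Z := (isCompact_Icc.prod isCompact_Icc).of_isClosed_subset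
    (hχ.preimage_isClosed_of_isClosed (isClosed_Icc.prod isClosed_Icc) isClosed_singleton)
    fun p hp => hp.1
  have happrox : ∀ ε > 0, ∃ p ∈ Z, |f₁ p.1 - f₂ p.2| ≤ ε := by
    intro ε hε
    obtain ⟨N, u, v, S₁, hv⟩ := exists_isStaircase hf₁ hab (by positivity : 0 < ε / 4) h₁
    obtain ⟨N', u', w, S₂, hw⟩ := exists_isStaircase hf₂ hcd (by positivity : 0 < ε / 4) h₂
    have hlt : v N < 1 := by
      have : ⌈(f₁ b - f₁ a) / (ε / 4)⌉ ≤ 0 := Int.ceil_le.2 (by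
        rw [Int.cast_zero]
        exact div_nonpos_of_nonpos_of_nonneg (sub_nonpos.2 (h₁ (left_mem_Icc.2 hab)).1)
          (by positivity))
      omega
    have hC := mem_connectedComponentIn_of_isStaircase S₁ S₂ (by positivity) hac
      (by rw [hv, hw, hac, hbd]) hlt
    have hsub := connectedComponentIn_subset
      {p ∈ Icc a b ×ˢ Icc c d | |f₁ p.1 - f₂ p.2| ≤ 4 * (ε / 4)} (a, c)
    have hac' : (a, c) ∈ {p ∈ Icc a b ×ˢ Icc c d | |f₁ p.1 - f₂ p.2| ≤ 4 * (ε / 4)} :=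
      ⟨⟨left_mem_Icc.2 hab, left_mem_Icc.2 hcd⟩, by simp [hac]; positivity⟩
    obtain ⟨p, hpC, hp⟩ := isPreconnected_connectedComponentIn.intermediate_value hC
      (mem_connectedComponentIn hac') (hχ.mono fun p hp => (hsub hp).1) ⟨hχbd, hχac⟩
    exact ⟨p, ⟨(hsub hpC).1, hp⟩, by linarith [(hsub hpC).2]⟩
  have hψ : ContinuousOn (fun p : ℝ × ℝ => |f₁ p.1 - f₂ p.2|) Z :=
    ((hf₁.comp continuousOn_fst fun p hp => hp.1.1).sub
      (hf₂.comp continuousOn_snd fun p hp => hp.1.2)).abs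
  obtain ⟨p₀, hp₀, -⟩ := happrox 1 one_pos
  obtain ⟨p, hpZ, hmin⟩ := hZ.exists_isMinOn ⟨p₀, hp₀⟩ hψ
  refine ⟨p, hpZ.1, ?_, hpZ.2⟩
  have : |f₁ p.1 - f₂ p.2| ≤ 0 := le_of_forall_pos_le_add fun ε hε => by
    obtain ⟨q, hq, hqε⟩ := happrox ε hε
    linarith [isMinOn_iff.1 hmin q hq]
  exact sub_eq_zero.1 (abs_nonpos_iff.1 this)

end MountainClimbing

theorem exists_eq_and_eq_add_one_of_periodic {Φ Λ : ℝ → ℝ} (hΦ : Continuous Φ)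
    (hΛ : Continuous Λ) {g : ℝ} (hg : 1 ≤ g) (hΦg : ∀ t, Φ (t + 1) = Φ t + g)
    (hΛp : Function.Periodic Λ 1) : ∃ s t, Λ s = Λ t ∧ Φ t = Φ s + 1 := by
  obtain ⟨_, ⟨a, rfl⟩, hmax⟩ :=
    (hΛp.compact_of_continuous one_ne_zero hΛ).exists_isGreatest (range_nonempty Λ)
  obtain ⟨b, hb, hmin⟩ := isCompact_Icc.exists_isMinOn
    (nonempty_Icc.2 (by linarith : a ≤ a + 1)) hΛ.continuousOn
  have hmaps : ∀ x ∈ Icc a (a + 1), Λ x ∈ Icc (Λ b) (Λ a) := fun x hx => ⟨hmin hx, hmax ⟨x, rfl⟩⟩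
  -- the second climber walks `[b, a + 1]` backwards, from `a + 1` down to `b`
  obtain ⟨⟨s, x⟩, -, hΛsx, hΦsx⟩ := mountain_climbing (f₁ := Λ) (f₂ := fun x => Λ (a + 1 + b - x))
    (χ := fun p => Φ (a + 1 + b - p.2) - Φ p.1 - 1) (c := b) (d := a + 1)
    hΛ.continuousOn (by fun_prop) hb.1 hb.2 (by simp [hΛp a]) (by simp)
    (fun x hx => hmaps x ⟨hx.1, hx.2.trans hb.2⟩)
    (fun x hx => by simpa [hΛp a] using hmaps _ ⟨by linarith [hx.2, hb.1], by linarith [hx.1]⟩)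
    (by fun_prop) (by simp [hΦg]; linarith) (by simp)
  exact ⟨s, a + 1 + b - x, hΛsx, by linarith⟩

theorem exists_eq_add_of_isCoprime {F G : ℝ → ℝ} (hF : Continuous F) (hG : Continuous G) {g : ℝ}
    (hg : 1 ≤ g) {n m : ℤ} (hnm : IsCoprime n m) (hFn : ∀ t, F (t + 1) = F t + g * n)
    (hGm : ∀ t, G (t + 1) = G t + g * m) : ∃ s t, F t = F s + n ∧ G t = G s + m := by
  obtain ⟨x, y, hxy⟩ := hnm
  have hxy' : (x : ℝ) * n + y * m = 1 := by exact_mod_cast hxy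
  obtain ⟨s, t, hΛ, hΦ⟩ := exists_eq_and_eq_add_one_of_periodic
    (Φ := fun t => x * F t + y * G t) (Λ := fun t => m * F t - n * G t) (by fun_prop)
    (by fun_prop) hg (fun t => by simp only [hFn, hGm]; linear_combination g * hxy')
    (fun t => by simp only [hFn, hGm]; ring)
  exact ⟨s, t, by linear_combination n * hΦ - y * hΛ - (F t - F s) * hxy',
    by linear_combination m * hΦ + x * hΛ - (G t - G s) * hxy'⟩

theorem IsCoprime.eq_one_of_mul_eq_self {R : Type*} [CommRing R] {a b k : R} (h : IsCoprime a b)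
    (ha : k * a = a) (hb : k * b = b) : k = 1 := by
  obtain ⟨x, y, hxy⟩ := h
  linear_combination (1 - k) * hxy + x * ha + y * hb

theorem simple_torus_loop_coprime_general
    (γ : AddCircle (1:ℝ) → AddCircle (1:ℝ) × AddCircle (1:ℝ))
    (hinj : Function.Injective γ)
    (n m : ℤ) (hclass : IsTorusClass γ n m) (hnm : (n, m) ≠ (0, 0)) :
    Int.gcd n m = 1 := by
  obtain ⟨F, G, hF, hG, hγ, hFn, hGm⟩ := hclass
  obtain ⟨g, n', m', hg, hgcd, rfl, rfl⟩ := Int.exists_gcd_one' (m := n) (n := m)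
    (Int.gcd_pos_iff.2 (not_and_or.1 fun h => hnm (by rw [h.1, h.2])))
  have hcop : IsCoprime n' m' := Int.isCoprime_iff_gcd_eq_one.2 hgcd
  push_cast at hFn hGm
  obtain ⟨s, t, hFst, hGst⟩ := exists_eq_add_of_isCoprime hF hG (Nat.one_le_cast.2 hg) hcop
    (fun t => by rw [hFn]; ring) (fun t => by rw [hGm]; ring)
  obtain ⟨j, hj⟩ : ∃ j : ℤ, j • (1 : ℝ) = t - s := by
    rw [← AddCircle.coe_eq_zero_iff, AddCircle.coe_sub, sub_eq_zero]
    exact hinj (by rw [hγ, hγ, hFst, hGst]; simp)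
  obtain rfl : t = s + j := by
    rw [zsmul_eq_mul, mul_one] at hj
    linarith
  have hjF : F (s + j) = F s + j * (n' * g) := by
    simpa using AddConstMapClass.map_add_int' (⟨F, hFn⟩ : AddConstMap ℝ ℝ 1 (n' * g)) s j
  have hjG : G (s + j) = G s + j * (m' * g) := by
    simpa using AddConstMapClass.map_add_int' (⟨G, hGm⟩ : AddConstMap ℝ ℝ 1 (m' * g)) s j
  have hjg : j * (g : ℤ) = 1 := hcop.eq_one_of_mul_eq_self
    (by exact_mod_cast (by push_cast; linarith : ((j * g * n' : ℤ) : ℝ) = n'))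
    (by exact_mod_cast (by push_cast; linarith : ((j * g * m' : ℤ) : ℝ) = m'))
  have hg1 : (g : ℤ) = 1 := Int.eq_one_of_mul_eq_one_left (Int.natCast_nonneg g) hjg
  simp [hgcd, hg1]

/-- The homology class of a simple closed curve on the torus has coprime coordinates. -/
theorem simple_torus_loop_coprime
    (γ : AddCircle (1:ℝ) → AddCircle (1:ℝ) × AddCircle (1:ℝ))
    (hcont : Continuous γ) (hinj : Function.Injective γ)
    (n m : ℤ) (hclass : IsTorusClass γ n m) (hnm : (n, m) ≠ (0, 0)) :
    Int.gcd n m = 1 :=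
  simple_torus_loop_coprime_general γ hinj n m hclass hnm
end

section
/- Derivative bound for rational Bézier curves: let γ(t) = (Σᵢ wᵢ Bernstein(n,i,t) Pᵢ) / (Σᵢ wᵢ Bernstein(n,i,t)) with all weights wᵢ > 0, W = maxᵢ wᵢ, w = minᵢ wᵢ. Then for all t ∈ [0,1], ‖γ'(t)‖ ≤ n · (W/w)² · max_{1≤i≤n} ‖Pᵢ − Pᵢ₋₁‖. -/
/-!
The curve is the centre of mass of the `Pᵢ` with weights `wᵢ bᵢ(t)`, so the quotient rule and an
antisymmetrisation give `γ' = (2 D²)⁻¹ Σᵢⱼ wᵢ wⱼ Wᵢⱼ (Pⱼ - Pᵢ)`, where `D = Σ wᵢ bᵢ ≥ w` and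
`Wᵢⱼ = bᵢ bⱼ' - bᵢ' bⱼ` is the Wronskian of two Bernstein polynomials.
From `t (1 - t) bᵢ' = (i - n t) bᵢ` one gets `t (1 - t) Wᵢⱼ = (j - i) bᵢ bⱼ`, so `(j - i) Wᵢⱼ ≥ 0`
on `[0, 1]`, while differentiating `Σ bᵢ = 1` and `Σ i bᵢ = n t` gives `Σᵢⱼ (j - i) Wᵢⱼ = 2 n`.
As `‖Pⱼ - Pᵢ‖ ≤ |j - i| M` with `M = maxₖ ‖Pₖ - Pₖ₋₁‖`, the double sum has norm at most
`2 n W² M`.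
-/

open Finset Polynomial

namespace Finset

theorem two_smul_sum_smul_sub_sum_smul {ι R E : Type*} [CommRing R] [AddCommGroup E] [Module R E]
    (s : Finset ι) (u u' : ι → R) (P : ι → E) :
    (2 : R) • ((∑ i ∈ s, u i) • ∑ j ∈ s, u' j • P j - (∑ i ∈ s, u' i) • ∑ j ∈ s, u j • P j) =
      ∑ i ∈ s, ∑ j ∈ s, (u i * u' j - u' i * u j) • (P j - P i) := by
  have h : ∑ i ∈ s, ∑ j ∈ s, (u i * u' j - u' i * u j) • P j =
      (∑ i ∈ s, u i) • ∑ j ∈ s, u' j • P j - (∑ i ∈ s, u' i) • ∑ j ∈ s, u j • P j := by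
    simp only [sum_smul_sum, sub_smul, mul_smul, sum_sub_distrib]
  have h' : ∑ i ∈ s, ∑ j ∈ s, (u i * u' j - u' i * u j) • P i = -
      ∑ i ∈ s, ∑ j ∈ s, (u i * u' j - u' i * u j) • P j := by
    rw [sum_comm, ← sum_neg_distrib]
    refine sum_congr rfl fun i _ => ?_
    rw [← sum_neg_distrib]
    exact sum_congr rfl fun j _ => by rw [← neg_smul, neg_sub, mul_comm (u j), mul_comm (u' j)]
  rw [← h]
  simp only [smul_sub, sum_sub_distrib]
  rw [h', sub_neg_eq_add, two_smul]

theorem sum_sum_sub_mul_mul_sub_mul {ι R : Type*} [CommRing R] (s : Finset ι) (x a b : ι → R) :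
    ∑ i ∈ s, ∑ j ∈ s, (x j - x i) * (a i * b j - b i * a j) =
      2 * ((∑ i ∈ s, a i) * ∑ j ∈ s, x j * b j - (∑ i ∈ s, b i) * ∑ j ∈ s, x j * a j) := by
  set f := fun i j => a i * (x j * b j) - b i * (x j * a j)
  calc ∑ i ∈ s, ∑ j ∈ s, (x j - x i) * (a i * b j - b i * a j)
      = ∑ i ∈ s, ∑ j ∈ s, (f i j + f j i) :=
        sum_congr rfl fun i _ => sum_congr rfl fun j _ => by simp only [f]; ring
    _ = 2 * ∑ i ∈ s, ∑ j ∈ s, f i j := by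
      simp only [sum_add_distrib]; rw [sum_comm (f := fun i j => f j i), two_mul]
    _ = _ := by simp only [f, sum_mul_sum, sum_sub_distrib]

theorem hasDerivAt_centerMass {ι E : Type*} [NormedAddCommGroup E] [NormedSpace ℝ E]
    (s : Finset ι) {u : ι → ℝ → ℝ} {u' : ι → ℝ} (P : ι → E) {t : ℝ}
    (hu : ∀ i ∈ s, HasDerivAt (u i) (u' i) t) (hD : ∑ i ∈ s, u i t ≠ 0) :
    HasDerivAt (fun x => s.centerMass (fun i => u i x) P)
      ((2 * (∑ i ∈ s, u i t) ^ 2)⁻¹ •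
        ∑ i ∈ s, ∑ j ∈ s, (u i t * u' j - u' i * u j t) • (P j - P i)) t := by
  have hD' : HasDerivAt (fun x => ∑ i ∈ s, u i x) (∑ i ∈ s, u' i) t := HasDerivAt.fun_sum hu
  have hN' : HasDerivAt (fun x => ∑ i ∈ s, u i x • P i) (∑ i ∈ s, u' i • P i) t :=
    HasDerivAt.fun_sum fun i hi => (hu i hi).smul_const (P i)
  refine ((hD'.inv hD).smul hN').congr_deriv ?_
  rw [← two_smul_sum_smul_sub_sum_smul, smul_smul, smul_sub, smul_smul, smul_smul]
  simp only [Pi.inv_apply]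
  match_scalars <;> field_simp

end Finset

theorem dist_le_abs_sub_mul_of_dist_succ_le {α : Type*} [PseudoMetricSpace α] {f : ℕ → α}
    {n : ℕ} {M : ℝ} (h : ∀ k < n, dist (f k) (f (k + 1)) ≤ M) {i j : ℕ} (hi : i ≤ n)
    (hj : j ≤ n) : dist (f i) (f j) ≤ |(i : ℝ) - j| * M := by
  wlog hij : i ≤ j generalizing i j
  · rw [dist_comm, abs_sub_comm]
    exact this hj hi (by omega)
  calc dist (f i) (f j) ≤ ∑ _k ∈ Ico i j, M :=
        dist_le_Ico_sum_of_dist_le hij fun _ hk => h _ (by omega)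
    _ = |(i : ℝ) - j| * M := by
        rw [sum_const, Nat.card_Ico, nsmul_eq_mul, abs_sub_comm,
          abs_of_nonneg (by simpa using hij), Nat.cast_sub hij]

namespace bernsteinPolynomial
variable {R : Type*} [CommRing R]

theorem X_mul_one_sub_X_mul_derivative (n ν : ℕ) :
    (X : R[X]) * (1 - X) * derivative (bernsteinPolynomial R n ν) =
      ((ν : R[X]) - (n : R[X]) * X) * bernsteinPolynomial R n ν := by
  rcases lt_or_ge n ν with h | h
  · simp [eq_zero_of_lt R h]
  obtain ⟨m, rfl⟩ := Nat.exists_eq_add_of_le h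
  simp only [bernsteinPolynomial, Nat.add_sub_cancel_left]
  rcases ν with _ | ν <;> rcases m with _ | m <;>
    simp only [derivative_mul, derivative_pow, derivative_sub, derivative_X, derivative_one,
      derivative_natCast, map_natCast, map_add, map_one, Nat.cast_add, Nat.cast_one,
      add_tsub_cancel_right] <;> ring

theorem X_mul_one_sub_X_mul_wronskian (n i j : ℕ) :
    (X : R[X]) * (1 - X) * wronskian (bernsteinPolynomial R n i) (bernsteinPolynomial R n j) =
      ((j : R[X]) - (i : R[X])) * bernsteinPolynomial R n i * bernsteinPolynomial R n j := by
  have hi := X_mul_one_sub_X_mul_derivative (R := R) n i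
  have hj := X_mul_one_sub_X_mul_derivative (R := R) n j
  rw [wronskian]
  linear_combination bernsteinPolynomial R n i * hj - bernsteinPolynomial R n j * hi

theorem sum_sum_sub_mul_wronskian (n : ℕ) :
    ∑ i ∈ range (n + 1), ∑ j ∈ range (n + 1),
      ((j : R[X]) - (i : R[X])) *
        wronskian (bernsteinPolynomial R n i) (bernsteinPolynomial R n j) = 2 * n := by
  have hsum := bernsteinPolynomial.sum R n
  have hmean : ∑ j ∈ range (n + 1), (j : R[X]) * bernsteinPolynomial R n j = n * (X : R[X]) := by
    simpa [nsmul_eq_mul] using bernsteinPolynomial.sum_smul R n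
  have hsum' : ∑ j ∈ range (n + 1), derivative (bernsteinPolynomial R n j) = 0 := by
    rw [← derivative_sum, hsum, derivative_one]
  have hmean' : ∑ j ∈ range (n + 1), (j : R[X]) * derivative (bernsteinPolynomial R n j) = n := by
    have := congrArg derivative hmean
    simpa [derivative_sum, derivative_mul] using this
  simp only [wronskian]
  rw [Finset.sum_sum_sub_mul_mul_sub_mul, hsum, hsum', hmean']
  ring

theorem eval_nonneg (n ν : ℕ) {t : ℝ} (ht : t ∈ Set.Icc 0 1) :
    0 ≤ (bernsteinPolynomial ℝ n ν).eval t := by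
  have h₀ := ht.1
  have h₁ := sub_nonneg.mpr ht.2
  simp only [bernsteinPolynomial, eval_mul, eval_pow, eval_sub, eval_one, eval_X, eval_natCast]
  positivity

theorem sub_mul_eval_wronskian_nonneg (n i j : ℕ) {t : ℝ} (ht : t ∈ Set.Icc 0 1) :
    0 ≤ ((j : ℝ) - i) *
      (wronskian (bernsteinPolynomial ℝ n i) (bernsteinPolynomial ℝ n j)).eval t := by
  have hcont : Continuous fun t : ℝ => ((j : ℝ) - i) *
      (wronskian (bernsteinPolynomial ℝ n i) (bernsteinPolynomial ℝ n j)).eval t := by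
    fun_prop
  suffices Set.Ioo (0 : ℝ) 1 ⊆ {t | 0 ≤ ((j : ℝ) - i) *
      (wronskian (bernsteinPolynomial ℝ n i) (bernsteinPolynomial ℝ n j)).eval t} by
    have := (isClosed_le continuous_const hcont).closure_subset_iff.mpr this
    rw [closure_Ioo zero_ne_one] at this
    exact this ht
  intro t ht
  have h := congrArg (eval t) (X_mul_one_sub_X_mul_wronskian (R := ℝ) n i j)
  simp only [eval_mul, eval_sub, eval_one, eval_X, eval_natCast] at h
  have hpos : 0 < t * (1 - t) := mul_pos ht.1 (sub_pos.mpr ht.2)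
  have hi := eval_nonneg n i (Set.Ioo_subset_Icc_self ht)
  have hj := eval_nonneg n j (Set.Ioo_subset_Icc_self ht)
  refine nonneg_of_mul_nonneg_right (a := t * (1 - t)) ?_ hpos
  rw [mul_left_comm, h]
  convert mul_nonneg (sq_nonneg ((j : ℝ) - i)) (mul_nonneg hi hj) using 1
  ring

theorem le_sum_eval_mul {n : ℕ} {t w : ℝ} (ht : t ∈ Set.Icc 0 1) {wt : ℕ → ℝ}
    (hw : ∀ i ≤ n, w ≤ wt i) :
    w ≤ ∑ i ∈ range (n + 1), (bernsteinPolynomial ℝ n i).eval t * wt i := calc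
  w = ∑ i ∈ range (n + 1), (bernsteinPolynomial ℝ n i).eval t * w := by
    rw [← sum_mul, ← eval_finsetSum, bernsteinPolynomial.sum, eval_one, one_mul]
  _ ≤ _ := sum_le_sum fun i hi =>
    mul_le_mul_of_nonneg_left (hw i (mem_range_succ_iff.mp hi)) (eval_nonneg n i ht)

theorem hasDerivAt_centerMass_eval_mul {E : Type*} [NormedAddCommGroup E] [NormedSpace ℝ E]
    (n : ℕ) (wt : ℕ → ℝ) (P : ℕ → E) {t : ℝ}
    (hD : ∑ i ∈ range (n + 1), (bernsteinPolynomial ℝ n i).eval t * wt i ≠ 0) :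
    HasDerivAt
      (fun s => (range (n + 1)).centerMass (fun i => (bernsteinPolynomial ℝ n i).eval s * wt i) P)
      ((2 * (∑ i ∈ range (n + 1), (bernsteinPolynomial ℝ n i).eval t * wt i) ^ 2)⁻¹ •
        ∑ i ∈ range (n + 1), ∑ j ∈ range (n + 1), (wt i * wt j *
          (wronskian (bernsteinPolynomial ℝ n i) (bernsteinPolynomial ℝ n j)).eval t) •
            (P j - P i)) t := by
  refine (hasDerivAt_centerMass _ P
    (fun i _ => ((bernsteinPolynomial ℝ n i).hasDerivAt t).mul_const (wt i)) hD).congr_deriv ?_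
  congr! 4 with i _ j _
  simp only [wronskian, eval_sub, eval_mul]
  ring

theorem norm_sum_sum_wronskian_smul_le {E : Type*} [NormedAddCommGroup E] [NormedSpace ℝ E]
    {n : ℕ} {t W M : ℝ} (ht : t ∈ Set.Icc 0 1) {wt : ℕ → ℝ} {P : ℕ → E}
    (hwt : ∀ i ≤ n, |wt i| ≤ W) (hP : ∀ i ≤ n, ∀ j ≤ n, ‖P j - P i‖ ≤ |(j : ℝ) - i| * M) :
    ‖∑ i ∈ range (n + 1), ∑ j ∈ range (n + 1), (wt i * wt j *
        (wronskian (bernsteinPolynomial ℝ n i) (bernsteinPolynomial ℝ n j)).eval t) •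
          (P j - P i)‖ ≤ 2 * n * W ^ 2 * M := by
  set V := fun i j => (wronskian (bernsteinPolynomial ℝ n i) (bernsteinPolynomial ℝ n j)).eval t
  have hW : 0 ≤ W := (abs_nonneg _).trans (hwt 0 n.zero_le)
  have hterm : ∀ i ≤ n, ∀ j ≤ n, ‖(wt i * wt j * V i j) • (P j - P i)‖ ≤
      W ^ 2 * M * (((j : ℝ) - i) * V i j) := by
    intro i hi j hj
    have hV : |V i j| * |(j : ℝ) - i| = ((j : ℝ) - i) * V i j := by
      rw [← abs_mul, mul_comm,
        abs_of_nonneg (sub_mul_eval_wronskian_nonneg n i j ht)]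
    calc ‖(wt i * wt j * V i j) • (P j - P i)‖
        = |wt i * wt j| * (|V i j| * ‖P j - P i‖) := by
          rw [norm_smul, Real.norm_eq_abs, abs_mul, mul_assoc]
      _ ≤ W ^ 2 * (|V i j| * (|(j : ℝ) - i| * M)) := by
        rw [abs_mul, sq]
        gcongr
        exacts [hwt i hi, hwt j hj, hP i hi j hj]
      _ = W ^ 2 * M * (((j : ℝ) - i) * V i j) := by rw [← hV]; ring
  calc _ ≤ ∑ i ∈ range (n + 1), ∑ j ∈ range (n + 1), ‖(wt i * wt j * V i j) • (P j - P i)‖ :=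
        (norm_sum_le _ _).trans (sum_le_sum fun i _ => norm_sum_le _ _)
    _ ≤ ∑ i ∈ range (n + 1), ∑ j ∈ range (n + 1), W ^ 2 * M * (((j : ℝ) - i) * V i j) :=
        sum_le_sum fun i hi => sum_le_sum fun j hj =>
          hterm i (mem_range_succ_iff.mp hi) j (mem_range_succ_iff.mp hj)
    _ = 2 * n * W ^ 2 * M := by
        have := congrArg (eval t) (bernsteinPolynomial.sum_sum_sub_mul_wronskian (R := ℝ) n)
        simp only [eval_finsetSum, eval_mul, eval_sub, eval_natCast, eval_ofNat] at this
        simp only [← mul_sum, V, this]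
        ring

end bernsteinPolynomial

/-- Derivative bound for a rational Bézier curve with positive weights:
`‖γ'(t)‖ ≤ n · (W/w)² · maxᵢ ‖Pᵢ − Pᵢ₋₁‖`, where `W` and `w` are the largest and smallest
weights. -/
theorem rational_bezier_deriv_bound (n : ℕ) (hn : 1 ≤ n)
    (P : ℕ → ℝ × ℝ) (wt : ℕ → ℝ) (hw : ∀ i ≤ n, 0 < wt i)
    (γ : ℝ → ℝ × ℝ)
    (hγ : ∀ t : ℝ, γ t =
      (∑ i ∈ Finset.range (n + 1),
          ((n.choose i : ℝ) * t ^ i * (1 - t) ^ (n - i) * wt i))⁻¹ •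
        ∑ i ∈ Finset.range (n + 1),
          ((n.choose i : ℝ) * t ^ i * (1 - t) ^ (n - i) * wt i) • P i)
    (W w : ℝ)
    (hW : W = (Finset.range (n + 1)).sup' Finset.nonempty_range_add_one wt)
    (hw' : w = (Finset.range (n + 1)).inf' Finset.nonempty_range_add_one wt)
    (t : ℝ) (ht : t ∈ Set.Icc (0:ℝ) 1) (d : ℝ × ℝ) (hd : HasDerivAt γ d t) :
    ‖d‖ ≤ n * (W / w) ^ 2 *
      (Finset.Icc 1 n).sup' (Finset.nonempty_Icc.mpr hn)
        (fun i => ‖P i - P (i - 1)‖) := by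
  set M := (Finset.Icc 1 n).sup' (Finset.nonempty_Icc.mpr hn) fun i => ‖P i - P (i - 1)‖
  have hw_le : ∀ i ≤ n, w ≤ wt i := fun i hi => hw' ▸ inf'_le wt (mem_range_succ_iff.mpr hi)
  have hw_pos : 0 < w := by
    obtain ⟨i, hi, hwi⟩ := exists_mem_eq_inf' nonempty_range_add_one wt
    exact hw' ▸ hwi ▸ hw i (mem_range_succ_iff.mp hi)
  have hwt_le : ∀ i ≤ n, |wt i| ≤ W := fun i hi => by
    rw [abs_of_pos (hw i hi), hW]; exact le_sup' wt (mem_range_succ_iff.mpr hi)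
  have hP : ∀ i ≤ n, ∀ j ≤ n, ‖P j - P i‖ ≤ |(j : ℝ) - i| * M := by
    intro i hi j hj
    rw [← dist_eq_norm]
    refine dist_le_abs_sub_mul_of_dist_succ_le (fun k hk => ?_) hj hi
    rw [dist_comm, dist_eq_norm]
    exact le_sup' (fun i => ‖P i - P (i - 1)‖) (mem_Icc.mpr ⟨k.succ_pos, hk⟩)
  have hγ' : γ = fun s =>
      (range (n + 1)).centerMass (fun i => (bernsteinPolynomial ℝ n i).eval s * wt i) P := by
    funext s; simp [hγ, centerMass, bernsteinPolynomial]
  have hD := bernsteinPolynomial.le_sum_eval_mul ht hw_le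
  rw [hd.unique (hγ' ▸ bernsteinPolynomial.hasDerivAt_centerMass_eval_mul n wt P
    (hw_pos.trans_le hD).ne'), norm_smul, Real.norm_of_nonneg (by positivity)]
  calc _ ≤ (2 * w ^ 2)⁻¹ * ‖_‖ := by gcongr
    _ ≤ (2 * w ^ 2)⁻¹ * (2 * n * W ^ 2 * M) :=
      mul_le_mul_of_nonneg_left
        (bernsteinPolynomial.norm_sum_sum_wronskian_smul_le ht hwt_le hP) (by positivity)
    _ = n * (W / w) ^ 2 * M := by field_simp
end
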